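/- arXiv:1706.00390 — 2 statements merged into one kernel-verified Lean document; each statement's English description precedes it below -/
import Mathlib

section
/- For any density matrix ρ on ℂ^d and α ∈ (0,∞), α ≠ 1, the minimum of (1/(α−1))·ln tr(ρ^α σ^{1−α}) over diagonal density matrices σ equals (1/(α−1))·ln ‖(ρ^α)^{diag}‖_{1/α}, where (ρ^α)^{diag} is the diagonal matrix with entries (ρ^α)_{jj} and ‖D‖_{1/α} := (∑_j D_{jj}^{1/α})^α; the minimizer is σ = Q/tr(Q) with Q = [(ρ^α)^{diag}]^{1/α}. -/
open Matrix Finset ComplexOrder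

/-!
Only the diagonal `aᵢ = ((ρ^α)ᵢᵢ).re` of `ρ^α` enters `tr(ρ^α σ^{1-α})` when `σ = diag q`, so the
problem is to extremise `∑ᵢ aᵢ qᵢ^{1-α}` over probability vectors `q`. Writing
`fᵢ = aᵢ^{1/α} / qᵢ` turns it into `∑ᵢ qᵢ fᵢ^α`, while `∑ᵢ qᵢ fᵢ = ∑ᵢ aᵢ^{1/α}` does not depend on
`q`; Jensen's inequality for `t ↦ t^α` (convex for `α ≥ 1`, concave for `α ≤ 1`) compares the two,
with equality when `f` is constant, i.e. `q ∝ a^{1/α}`. The sign of `(α - 1)⁻¹` turns both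
cases into the same lower bound.
-/

/-- Real power of a Hermitian matrix taken on its support (`0 ^ α = 0` for `α ≠ 0`),
via the spectral decomposition. -/
noncomputable def mrpow {n : Type*} [Fintype n] [DecidableEq n]
    (ρ : Matrix n n ℂ) (hρ : ρ.IsHermitian) (α : ℝ) : Matrix n n ℂ :=
  (hρ.eigenvectorUnitary : Matrix n n ℂ) *
    Matrix.diagonal (fun i => ((hρ.eigenvalues i ^ α : ℝ) : ℂ)) *
    star (hρ.eigenvectorUnitary : Matrix n n ℂ)

section Diagonal

variable {n : Type*} [Fintype n] [DecidableEq n]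

lemma Matrix.trace_mul_diagonal_ofReal_re (A : Matrix n n ℂ) (c : n → ℝ) :
    (trace (A * diagonal fun i => (c i : ℂ))).re = ∑ i, (A i i).re * c i := by
  simp [trace, mul_diagonal, Complex.re_sum]

lemma Matrix.mul_diagonal_ofReal_mul_star_apply_self_re (U : Matrix n n ℂ) (f : n → ℝ) (i : n) :
    ((U * diagonal (fun k => (f k : ℂ)) * star U) i i).re =
      ∑ k, f k * Complex.normSq (U i k) := by
  rw [mul_apply, Complex.re_sum]
  simp only [mul_diagonal, star_apply]
  refine sum_congr rfl fun k _ => ?_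
  rw [mul_comm (U i k), mul_assoc, Complex.star_def, Complex.mul_conj, ← Complex.ofReal_mul,
    Complex.ofReal_re]

lemma mrpow_one {ρ : Matrix n n ℂ} (hρ : ρ.IsHermitian) : mrpow ρ hρ 1 = ρ := by
  simp only [mrpow, Real.rpow_one]
  exact hρ.spectral_theorem.symm

lemma mrpow_apply_self_re {ρ : Matrix n n ℂ} (hρ : ρ.IsHermitian) (α : ℝ) (i : n) :
    (mrpow ρ hρ α i i).re =
      ∑ k, hρ.eigenvalues k ^ α * Complex.normSq ((hρ.eigenvectorUnitary : Matrix n n ℂ) i k) :=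
  mul_diagonal_ofReal_mul_star_apply_self_re _ _ i

namespace Matrix.PosSemidef

lemma mrpow_apply_self_re_nonneg {ρ : Matrix n n ℂ} (hρ : ρ.PosSemidef) (α : ℝ) (i : n) :
    0 ≤ (mrpow ρ hρ.1 α i i).re := by
  rw [mrpow_apply_self_re]
  exact sum_nonneg fun k _ =>
    mul_nonneg (Real.rpow_nonneg (hρ.eigenvalues_nonneg k) α) (Complex.normSq_nonneg _)

lemma mrpow_apply_self_re_eq_zero_iff_forall {ρ : Matrix n n ℂ} (hρ : ρ.PosSemidef) {α : ℝ}
    (hα : α ≠ 0) (i : n) :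
    (mrpow ρ hρ.1 α i i).re = 0 ↔
      ∀ k, hρ.1.eigenvalues k = 0 ∨ (hρ.1.eigenvectorUnitary : Matrix n n ℂ) i k = 0 := by
  rw [mrpow_apply_self_re, sum_eq_zero_iff_of_nonneg fun k _ =>
    mul_nonneg (Real.rpow_nonneg (hρ.eigenvalues_nonneg k) α) (Complex.normSq_nonneg _)]
  simp only [mem_univ, true_implies, mul_eq_zero, Complex.normSq_eq_zero,
    Real.rpow_eq_zero (hρ.eigenvalues_nonneg _) hα]

lemma mrpow_apply_self_re_eq_zero_iff {ρ : Matrix n n ℂ} (hρ : ρ.PosSemidef) {α : ℝ}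
    (hα : α ≠ 0) (i : n) :
    (mrpow ρ hρ.1 α i i).re = 0 ↔ (ρ i i).re = 0 := by
  have h := hρ.mrpow_apply_self_re_eq_zero_iff_forall one_ne_zero i
  rw [mrpow_one] at h
  rw [h, hρ.mrpow_apply_self_re_eq_zero_iff_forall hα]

end Matrix.PosSemidef

end Diagonal

lemma mul_rpow_one_sub_eq_mul_div_rpow {a q α : ℝ} (hα : α ≠ 0) (ha : 0 ≤ a) (hq : 0 ≤ q)
    (hqa : q = 0 → a = 0) :
    a * q ^ (1 - α) = q * (a ^ α⁻¹ / q) ^ α := by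
  rcases hq.eq_or_lt with rfl | hq
  · simp [hqa rfl]
  rw [Real.div_rpow (Real.rpow_nonneg ha _) hq.le, Real.rpow_inv_rpow ha hα,
    Real.rpow_sub hq, Real.rpow_one]
  ring

lemma rpow_inv_eq_mul_div {a q α : ℝ} (hα : α ≠ 0) (hqa : q = 0 → a = 0) :
    a ^ α⁻¹ = q * (a ^ α⁻¹ / q) := by
  rcases eq_or_ne q 0 with rfl | hq
  · simp [hqa rfl, Real.zero_rpow (inv_ne_zero hα)]
  · exact (mul_div_cancel₀ _ hq).symm

section Weights

variable {ι : Type*} [Fintype ι] {α : ℝ} {a q : ι → ℝ}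

lemma sum_rpow_inv_eq_sum_mul_div (hα : α ≠ 0) (hqa : ∀ i, q i = 0 → a i = 0) :
    ∑ i, a i ^ α⁻¹ = ∑ i, q i * (a i ^ α⁻¹ / q i) :=
  sum_congr rfl fun i _ => rpow_inv_eq_mul_div hα (hqa i)

lemma sum_mul_rpow_one_sub_eq_sum_mul_div_rpow (hα : α ≠ 0) (ha : ∀ i, 0 ≤ a i)
    (hq : ∀ i, 0 ≤ q i) (hqa : ∀ i, q i = 0 → a i = 0) :
    ∑ i, a i * q i ^ (1 - α) = ∑ i, q i * (a i ^ α⁻¹ / q i) ^ α :=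
  sum_congr rfl fun i _ => mul_rpow_one_sub_eq_mul_div_rpow hα (ha i) (hq i) (hqa i)

theorem rpow_sum_rpow_inv_le_sum_mul_rpow_one_sub (hα : 1 ≤ α) (ha : ∀ i, 0 ≤ a i)
    (hq : ∀ i, 0 ≤ q i) (hq1 : ∑ i, q i = 1) (hqa : ∀ i, q i = 0 → a i = 0) :
    (∑ i, a i ^ α⁻¹) ^ α ≤ ∑ i, a i * q i ^ (1 - α) := by
  have hα0 : α ≠ 0 := by positivity
  rw [sum_rpow_inv_eq_sum_mul_div hα0 hqa,
    sum_mul_rpow_one_sub_eq_sum_mul_div_rpow hα0 ha hq hqa]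
  exact (convexOn_rpow hα).map_sum_le (fun i _ => hq i) hq1 fun i _ =>
    div_nonneg (Real.rpow_nonneg (ha i) _) (hq i)

theorem sum_mul_rpow_one_sub_le_rpow_sum_rpow_inv (hα0 : 0 < α) (hα1 : α ≤ 1)
    (ha : ∀ i, 0 ≤ a i) (hq : ∀ i, 0 ≤ q i) (hq1 : ∑ i, q i = 1)
    (hqa : ∀ i, q i = 0 → a i = 0) :
    ∑ i, a i * q i ^ (1 - α) ≤ (∑ i, a i ^ α⁻¹) ^ α := by
  rw [sum_rpow_inv_eq_sum_mul_div hα0.ne' hqa,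
    sum_mul_rpow_one_sub_eq_sum_mul_div_rpow hα0.ne' ha hq hqa]
  exact (Real.concaveOn_rpow hα0.le hα1).le_map_sum (fun i _ => hq i) hq1 fun i _ =>
    div_nonneg (Real.rpow_nonneg (ha i) _) (hq i)

lemma sum_mul_rpow_one_sub_div_sum_rpow_inv (hα : α ≠ 0) (ha : ∀ i, 0 ≤ a i) :
    ∑ i, a i * (a i ^ α⁻¹ / ∑ j, a j ^ α⁻¹) ^ (1 - α) = (∑ j, a j ^ α⁻¹) ^ α := by
  set S := ∑ j, a j ^ α⁻¹
  have hterm : ∀ i, a i * (a i ^ α⁻¹ / S) ^ (1 - α) = a i ^ α⁻¹ / S * S ^ α := by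
    intro i
    rcases (ha i).eq_or_lt with h | h
    · simp [← h, Real.zero_rpow (inv_ne_zero hα)]
    have hai : 0 < a i ^ α⁻¹ := Real.rpow_pos_of_pos h _
    have hS : 0 < S :=
      hai.trans_le (single_le_sum (fun j _ => Real.rpow_nonneg (ha j) _) (mem_univ i))
    rw [mul_rpow_one_sub_eq_mul_div_rpow hα (ha i) (by positivity)
      (absurd · (div_pos hai hS).ne'), div_div_cancel₀ hai.ne']
  rw [sum_congr rfl fun i _ => hterm i, ← sum_mul, ← sum_div]
  rcases eq_or_ne S 0 with hS | hS
  · simp [hS, Real.zero_rpow hα]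
  · rw [div_self hS, one_mul]

theorem isLeast_inv_sub_one_mul_log_sum_mul_rpow_one_sub (hα : 0 < α) (ha : ∀ i, 0 ≤ a i)
    (ha0 : a ≠ 0) :
    IsLeast {v : ℝ | ∃ q : ι → ℝ, (∀ i, 0 ≤ q i) ∧ (∑ i, q i = 1) ∧
        (∀ i, a i ≠ 0 → q i ≠ 0) ∧ v = (α - 1)⁻¹ * Real.log (∑ i, a i * q i ^ (1 - α))}
      ((α - 1)⁻¹ * Real.log ((∑ i, a i ^ α⁻¹) ^ α)) := by
  obtain ⟨j, hj⟩ := Function.ne_iff.mp ha0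
  have haj : 0 < a j := (ha j).lt_of_ne' hj
  have hS : 0 < ∑ i, a i ^ α⁻¹ :=
    sum_pos' (fun i _ => by have := ha i; positivity) ⟨j, mem_univ j, by positivity⟩
  refine ⟨⟨fun i => a i ^ α⁻¹ / ∑ j, a j ^ α⁻¹, fun i => by have := ha i; positivity,
    by rw [← sum_div, div_self hS.ne'], fun i hai => ?_,
    by rw [sum_mul_rpow_one_sub_div_sum_rpow_inv hα.ne' ha]⟩, ?_⟩
  · exact div_ne_zero ((Real.rpow_ne_zero (ha i) (inv_ne_zero hα.ne')).mpr hai) hS.ne'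
  rintro v ⟨q, hq, hq1, hsupp, rfl⟩
  have hqa : ∀ i, q i = 0 → a i = 0 := fun i => not_imp_not.mp (hsupp i)
  have hT : 0 < ∑ i, a i * q i ^ (1 - α) :=
    sum_pos' (fun i _ => by have := ha i; have := hq i; positivity)
      ⟨j, mem_univ j, mul_pos haj (Real.rpow_pos_of_pos ((hq j).lt_of_ne' (hsupp j hj)) _)⟩
  rcases le_total α 1 with hα1 | hα1
  · exact mul_le_mul_of_nonpos_left
      (Real.log_le_log hT (sum_mul_rpow_one_sub_le_rpow_sum_rpow_inv hα hα1 ha hq hq1 hqa))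
      (inv_nonpos.mpr (by linarith))
  · exact mul_le_mul_of_nonneg_left
      (Real.log_le_log (by positivity)
        (rpow_sum_rpow_inv_le_sum_mul_rpow_one_sub hα1 ha hq hq1 hqa))
      (inv_nonneg.mpr (by linarith))

end Weights

theorem renyiCoherence_closed_formula_general {d : ℕ}
    (ρ : Matrix (Fin d) (Fin d) ℂ) (hρ : ρ.PosSemidef) (htr : ρ.trace = 1)
    (α : ℝ) (hα0 : 0 < α) :
    IsLeast
      {v : ℝ | ∃ q : Fin d → ℝ, (∀ i, 0 ≤ q i) ∧ (∑ i, q i = 1) ∧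
        (∀ i, (ρ i i).re ≠ 0 → q i ≠ 0) ∧
        v = (α - 1)⁻¹ *
          Real.log (Matrix.trace (mrpow ρ hρ.1 α *
            Matrix.diagonal (fun i => ((q i ^ (1 - α) : ℝ) : ℂ)))).re}
      ((α - 1)⁻¹ *
        Real.log ((∑ j, ((mrpow ρ hρ.1 α) j j).re ^ α⁻¹) ^ α)) ∧
    -- the minimizer is `σ = Q / tr Q` with `Q = [(ρ^α)^diag]^{1/α}`
    (α - 1)⁻¹ *
        Real.log (Matrix.trace (mrpow ρ hρ.1 α *
          Matrix.diagonal (fun i =>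
            ((((((mrpow ρ hρ.1 α) i i).re ^ α⁻¹) /
                (∑ j, ((mrpow ρ hρ.1 α) j j).re ^ α⁻¹)) ^ (1 - α) : ℝ) : ℂ)))).re
      = (α - 1)⁻¹ *
        Real.log ((∑ j, ((mrpow ρ hρ.1 α) j j).re ^ α⁻¹) ^ α) := by
  have ha := hρ.mrpow_apply_self_re_nonneg α
  have ha0 : (fun i => (mrpow ρ hρ.1 α i i).re) ≠ 0 := by
    intro h
    have hdiag : ∀ i, (ρ i i).re = 0 := fun i =>
      (hρ.mrpow_apply_self_re_eq_zero_iff hα0.ne' i).mp (congrFun h i)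
    simpa [trace, Complex.re_sum, hdiag] using congrArg Complex.re htr
  simp only [trace_mul_diagonal_ofReal_re, ne_eq, ← hρ.mrpow_apply_self_re_eq_zero_iff hα0.ne']
  exact ⟨isLeast_inv_sub_one_mul_log_sum_mul_rpow_one_sub hα0 ha ha0,
    by rw [sum_mul_rpow_one_sub_div_sum_rpow_inv hα0.ne' ha]⟩

/-- For a density matrix `ρ` and `α ∈ (0,∞)`, `α ≠ 1`, the minimum of
`(α−1)⁻¹ ln tr(ρ^α σ^{1−α})` over diagonal density matrices `σ` (whose support
contains that of `ρ`) equals `(α−1)⁻¹ ln ‖(ρ^α)^diag‖_{1/α}` where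
`‖D‖_{1/α} = (∑ⱼ Dⱼⱼ^{1/α})^α`; the minimizer is `σ = Q/tr Q` with
`Q = [(ρ^α)^diag]^{1/α}`. -/
theorem renyiCoherence_closed_formula {d : ℕ}
    (ρ : Matrix (Fin d) (Fin d) ℂ) (hρ : ρ.PosSemidef) (htr : ρ.trace = 1)
    (α : ℝ) (hα0 : 0 < α) (hα1 : α ≠ 1) :
    IsLeast
      {v : ℝ | ∃ q : Fin d → ℝ, (∀ i, 0 ≤ q i) ∧ (∑ i, q i = 1) ∧
        (∀ i, (ρ i i).re ≠ 0 → q i ≠ 0) ∧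
        v = (α - 1)⁻¹ *
          Real.log (Matrix.trace (mrpow ρ hρ.1 α *
            Matrix.diagonal (fun i => ((q i ^ (1 - α) : ℝ) : ℂ)))).re}
      ((α - 1)⁻¹ *
        Real.log ((∑ j, ((mrpow ρ hρ.1 α) j j).re ^ α⁻¹) ^ α)) ∧
    -- the minimizer is `σ = Q / tr Q` with `Q = [(ρ^α)^diag]^{1/α}`
    (α - 1)⁻¹ *
        Real.log (Matrix.trace (mrpow ρ hρ.1 α *
          Matrix.diagonal (fun i =>
            ((((((mrpow ρ hρ.1 α) i i).re ^ α⁻¹) /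
                (∑ j, ((mrpow ρ hρ.1 α) j j).re ^ α⁻¹)) ^ (1 - α) : ℝ) : ℂ)))).re
      = (α - 1)⁻¹ *
        Real.log ((∑ j, ((mrpow ρ hρ.1 α) j j).re ^ α⁻¹) ^ α) :=
  renyiCoherence_closed_formula_general ρ hρ htr α hα0
end

section
/- Let ρ be a density matrix on ℂ^d and ρ_MC := ∑_{j,k} ρ_{jk} |jj⟩⟨kk| the corresponding maximally correlated state on ℂ^d ⊗ ℂ^d. Then for any diagonal density matrix σ on ℂ^d and any α ∈ (0,∞), α ≠ 1: tr(ρ_MC^α (I ⊗ σ)^{1−α}) = tr(ρ^α σ^{1−α}) and tr[((I⊗σ)^{(1−α)/(2α)} ρ_MC (I⊗σ)^{(1−α)/(2α)})^α] = tr[(σ^{(1−α)/(2α)} ρ σ^{(1−α)/(2α)})^α]. -/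
open Matrix Finset ComplexOrder

/-!
With the isometry `V = ∑ⱼ |jj⟩⟨j|` (`Matrix.diagIsometry`) one has `ρ_MC = V ρ V†` and
`(I ⊗ σ)^s V = V σ^s`, so both sides of each identity are traces of `V (·) V†`-conjugates of the
right-hand matrices. Conjugation by an isometry is a non-unital star homomorphism, hence commutes
with the functional calculus of any `f` with `f 0 = 0`, such as `x ↦ x ^ α` for `α ≠ 0`; and it
preserves traces.
-/

namespace Matrix

section IsometryConj

variable {n m : Type*} [Fintype n] [DecidableEq n] [Fintype m]

theorem trace_isometry_conj {V : Matrix m n ℂ} (hV : Vᴴ * V = 1) (A : Matrix n n ℂ) :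
    (V * A * Vᴴ).trace = A.trace := by
  rw [trace_mul_comm, ← Matrix.mul_assoc, hV, Matrix.one_mul]

def isometryConjHom (V : Matrix m n ℂ) (hV : Vᴴ * V = 1) :
    Matrix n n ℂ →⋆ₙₐ[ℂ] Matrix m m ℂ where
  toFun A := V * A * Vᴴ
  map_smul' c A := by simp [Matrix.mul_smul, Matrix.smul_mul]
  map_zero' := by simp
  map_add' A B := by simp [Matrix.mul_add, Matrix.add_mul]
  map_mul' A B := by
    change V * (A * B) * Vᴴ = V * A * Vᴴ * (V * B * Vᴴ)
    rw [show V * A * Vᴴ * (V * B * Vᴴ) = V * A * (Vᴴ * V) * B * Vᴴ by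
      simp only [Matrix.mul_assoc], hV, Matrix.mul_one, Matrix.mul_assoc V A]
  map_star' A := by simp [star_eq_conjTranspose, Matrix.mul_assoc]

theorem continuous_isometryConjHom (V : Matrix m n ℂ) (hV : Vᴴ * V = 1) :
    Continuous (isometryConjHom V hV) :=
  (continuous_const.matrix_mul continuous_id).matrix_mul continuous_const

variable [DecidableEq m]

theorem continuousOn_quasispectrum (f : ℝ → ℝ) (A : Matrix n n ℂ) :
    ContinuousOn f (quasispectrum ℝ A) := by
  rw [quasispectrum_eq_spectrum_union_zero]
  exact (finite_real_spectrum.union (Set.finite_singleton 0)).continuousOn f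

theorem mrpow_eq_cfc {A : Matrix n n ℂ} (hA : A.IsHermitian) (α : ℝ) :
    mrpow A hA α = cfc (· ^ α : ℝ → ℝ) A := by
  rw [hA.cfc_eq, IsHermitian.cfc, Unitary.conjStarAlgAut_apply]
  rfl

theorem mrpow_eq_cfcₙ {A : Matrix n n ℂ} (hA : A.IsHermitian) {α : ℝ} (hα : α ≠ 0) :
    mrpow A hA α = cfcₙ (· ^ α : ℝ → ℝ) A := by
  rw [mrpow_eq_cfc, cfcₙ_eq_cfc (continuousOn_quasispectrum _ A)
    (Real.zero_rpow hα : (0 : ℝ) ^ α = 0)]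

theorem mrpow_eq_isometry_conj {V : Matrix m n ℂ} (hV : Vᴴ * V = 1)
    {A : Matrix n n ℂ} (hA : A.IsHermitian) {B : Matrix m m ℂ} (hB : B.IsHermitian)
    (hBA : B = V * A * Vᴴ) {α : ℝ} (hα : α ≠ 0) :
    mrpow B hB α = V * mrpow A hA α * Vᴴ := by
  subst hBA
  rw [mrpow_eq_cfcₙ hA hα, mrpow_eq_cfcₙ hB hα]
  exact ((isometryConjHom V hV).map_cfcₙ _ A (continuousOn_quasispectrum _ A)
    (Real.zero_rpow hα : (0 : ℝ) ^ α = 0) (continuous_isometryConjHom V hV)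
    hA.isSelfAdjoint hB.isSelfAdjoint).symm

end IsometryConj

section DiagIsometry

variable (R : Type*) [Semiring R] (n : Type*) [DecidableEq n]

def diagIsometry : Matrix (n × n) n R := of fun p k => if p = (k, k) then 1 else 0

variable {R n}

theorem diagIsometry_apply_eq_zero {p : n × n} (hp : p.1 ≠ p.2) (k : n) :
    diagIsometry R n p k = 0 :=
  if_neg fun h => hp (by rw [h])

variable [Fintype n]

theorem diagIsometry_mul_apply {l : Type*} (A : Matrix n l R) (p : n × n) (k : l) :
    (diagIsometry R n * A) p k = if p.1 = p.2 then A p.1 k else 0 := by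
  rcases p with ⟨i, j⟩
  by_cases hij : i = j
  · subst hij
    simp [diagIsometry, mul_apply]
  · simp [mul_apply, diagIsometry_apply_eq_zero (R := R) (p := (i, j)) hij, hij]

theorem diagonal_snd_mul_diagIsometry (f : n → R) :
    diagonal (fun p : n × n => f p.2) * diagIsometry R n = diagIsometry R n * diagonal f := by
  ext ⟨i, j⟩ k
  by_cases h : j = k
  · subst h
    simp [diagIsometry]
  · simp [diagIsometry, h]

variable [StarRing R]

theorem mul_conjTranspose_diagIsometry_apply {l : Type*} (A : Matrix l n R) (k : l)
    (p : n × n) : (A * (diagIsometry R n)ᴴ) k p = if p.1 = p.2 then A k p.1 else 0 := by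
  rcases p with ⟨i, j⟩
  by_cases hij : i = j
  · subst hij
    simp [diagIsometry, mul_apply, apply_ite star]
  · simp [mul_apply, diagIsometry_apply_eq_zero (R := R) (p := (i, j)) hij, hij]

theorem conjTranspose_diagIsometry_mul_self :
    (diagIsometry R n)ᴴ * diagIsometry R n = 1 := by
  ext k l
  simp [diagIsometry, mul_apply, one_apply, apply_ite star, eq_comm]

theorem diagIsometry_conj_apply (A : Matrix n n R) (p r : n × n) :
    (diagIsometry R n * A * (diagIsometry R n)ᴴ) p r =
      if p.1 = p.2 ∧ r.1 = r.2 then A p.1 r.1 else 0 := by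
  rw [mul_conjTranspose_diagIsometry_apply, diagIsometry_mul_apply, ite_and]
  split_ifs <;> rfl

theorem conjTranspose_diagIsometry_mul_diagonal_snd (f : n → R) :
    (diagIsometry R n)ᴴ * diagonal (fun p : n × n => f p.2) =
      diagonal f * (diagIsometry R n)ᴴ := by
  simpa [conjTranspose_mul, diagonal_conjTranspose, Pi.star_def] using
    congrArg conjTranspose (diagonal_snd_mul_diagIsometry (R := R) (star f))

theorem diagIsometry_conj_mul_diagonal_snd (A : Matrix n n R) (f : n → R) :
    diagIsometry R n * A * (diagIsometry R n)ᴴ * diagonal (fun p : n × n => f p.2) =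
      diagIsometry R n * (A * diagonal f) * (diagIsometry R n)ᴴ := by
  rw [Matrix.mul_assoc _ (diagIsometry R n)ᴴ, conjTranspose_diagIsometry_mul_diagonal_snd,
    ← Matrix.mul_assoc, Matrix.mul_assoc (diagIsometry R n)]

theorem diagonal_snd_mul_diagIsometry_conj (A : Matrix n n R) (f g : n → R) :
    diagonal (fun p : n × n => f p.2) * (diagIsometry R n * A * (diagIsometry R n)ᴴ) *
        diagonal (fun p : n × n => g p.2) =
      diagIsometry R n * (diagonal f * A * diagonal g) * (diagIsometry R n)ᴴ := by
  rw [← Matrix.mul_assoc, ← Matrix.mul_assoc, diagonal_snd_mul_diagIsometry,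
    Matrix.mul_assoc (diagIsometry R n) (diagonal f), diagIsometry_conj_mul_diagonal_snd]

end DiagIsometry

end Matrix

theorem renyi_maximally_correlated_general {d : ℕ}
    (ρ : Matrix (Fin d) (Fin d) ℂ) (hρ : ρ.PosSemidef)
    (q : Fin d → ℝ)
    (ρMC : Matrix (Fin d × Fin d) (Fin d × Fin d) ℂ)
    (hMCdef : ∀ p r : Fin d × Fin d,
      ρMC p r = if p.1 = p.2 ∧ r.1 = r.2 then ρ p.1 r.1 else 0)
    (hMC : ρMC.IsHermitian)
    (α : ℝ) (hα0 : 0 < α)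
    (h₁ : (Matrix.diagonal (fun p : Fin d × Fin d =>
            ((q p.2 ^ ((1 - α) / (2 * α)) : ℝ) : ℂ)) * ρMC *
          Matrix.diagonal (fun p : Fin d × Fin d =>
            ((q p.2 ^ ((1 - α) / (2 * α)) : ℝ) : ℂ))).IsHermitian)
    (h₂ : (Matrix.diagonal (fun j : Fin d => ((q j ^ ((1 - α) / (2 * α)) : ℝ) : ℂ)) * ρ *
          Matrix.diagonal (fun j : Fin d =>
            ((q j ^ ((1 - α) / (2 * α)) : ℝ) : ℂ))).IsHermitian) :
    Matrix.trace (mrpow ρMC hMC α *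
        Matrix.diagonal (fun p : Fin d × Fin d => ((q p.2 ^ (1 - α) : ℝ) : ℂ)))
      = Matrix.trace (mrpow ρ hρ.1 α *
          Matrix.diagonal (fun j : Fin d => ((q j ^ (1 - α) : ℝ) : ℂ))) ∧
    Matrix.trace (mrpow (Matrix.diagonal (fun p : Fin d × Fin d =>
          ((q p.2 ^ ((1 - α) / (2 * α)) : ℝ) : ℂ)) * ρMC *
        Matrix.diagonal (fun p : Fin d × Fin d =>
          ((q p.2 ^ ((1 - α) / (2 * α)) : ℝ) : ℂ))) h₁ α)
      = Matrix.trace (mrpow (Matrix.diagonal (fun j : Fin d =>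
            ((q j ^ ((1 - α) / (2 * α)) : ℝ) : ℂ)) * ρ *
          Matrix.diagonal (fun j : Fin d =>
            ((q j ^ ((1 - α) / (2 * α)) : ℝ) : ℂ))) h₂ α) := by
  set V := diagIsometry ℂ (Fin d)
  have hV : Vᴴ * V = 1 := conjTranspose_diagIsometry_mul_self
  have hρMC : ρMC = V * ρ * Vᴴ := ext fun p r => by rw [hMCdef, diagIsometry_conj_apply]
  constructor
  · rw [mrpow_eq_isometry_conj hV hρ.1 hMC hρMC hα0.ne',
      diagIsometry_conj_mul_diagonal_snd _ fun j => ((q j ^ (1 - α) : ℝ) : ℂ),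
      trace_isometry_conj hV]
  · have hconj := diagonal_snd_mul_diagIsometry_conj ρ
      (fun j => ((q j ^ ((1 - α) / (2 * α)) : ℝ) : ℂ))
      (fun j => ((q j ^ ((1 - α) / (2 * α)) : ℝ) : ℂ))
    rw [← hρMC] at hconj
    rw [mrpow_eq_isometry_conj hV h₂ h₁ hconj hα0.ne', trace_isometry_conj hV]

/-- For a density matrix `ρ` with associated maximally correlated state
`ρ_MC = ∑_{j,k} ρ_{jk} |jj⟩⟨kk|` and any diagonal density matrix `σ = diag q`:
`tr(ρ_MC^α (I ⊗ σ)^{1−α}) = tr(ρ^α σ^{1−α})` and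
`tr[((I⊗σ)^{(1−α)/(2α)} ρ_MC (I⊗σ)^{(1−α)/(2α)})^α]
  = tr[(σ^{(1−α)/(2α)} ρ σ^{(1−α)/(2α)})^α]`
for all `α ∈ (0,∞)`, `α ≠ 1` (powers of the diagonal matrices taken on supports). -/
theorem renyi_maximally_correlated {d : ℕ}
    (ρ : Matrix (Fin d) (Fin d) ℂ) (hρ : ρ.PosSemidef) (htr : ρ.trace = 1)
    (q : Fin d → ℝ) (hq0 : ∀ i, 0 ≤ q i) (hq1 : ∑ i, q i = 1)
    (ρMC : Matrix (Fin d × Fin d) (Fin d × Fin d) ℂ)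
    (hMCdef : ∀ p r : Fin d × Fin d,
      ρMC p r = if p.1 = p.2 ∧ r.1 = r.2 then ρ p.1 r.1 else 0)
    (hMC : ρMC.IsHermitian)
    (α : ℝ) (hα0 : 0 < α) (hα1 : α ≠ 1)
    (h₁ : (Matrix.diagonal (fun p : Fin d × Fin d =>
            ((q p.2 ^ ((1 - α) / (2 * α)) : ℝ) : ℂ)) * ρMC *
          Matrix.diagonal (fun p : Fin d × Fin d =>
            ((q p.2 ^ ((1 - α) / (2 * α)) : ℝ) : ℂ))).IsHermitian)
    (h₂ : (Matrix.diagonal (fun j : Fin d => ((q j ^ ((1 - α) / (2 * α)) : ℝ) : ℂ)) * ρ *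
          Matrix.diagonal (fun j : Fin d =>
            ((q j ^ ((1 - α) / (2 * α)) : ℝ) : ℂ))).IsHermitian) :
    Matrix.trace (mrpow ρMC hMC α *
        Matrix.diagonal (fun p : Fin d × Fin d => ((q p.2 ^ (1 - α) : ℝ) : ℂ)))
      = Matrix.trace (mrpow ρ hρ.1 α *
          Matrix.diagonal (fun j : Fin d => ((q j ^ (1 - α) : ℝ) : ℂ))) ∧
    Matrix.trace (mrpow (Matrix.diagonal (fun p : Fin d × Fin d =>
          ((q p.2 ^ ((1 - α) / (2 * α)) : ℝ) : ℂ)) * ρMC *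
        Matrix.diagonal (fun p : Fin d × Fin d =>
          ((q p.2 ^ ((1 - α) / (2 * α)) : ℝ) : ℂ))) h₁ α)
      = Matrix.trace (mrpow (Matrix.diagonal (fun j : Fin d =>
            ((q j ^ ((1 - α) / (2 * α)) : ℝ) : ℂ)) * ρ *
          Matrix.diagonal (fun j : Fin d =>
            ((q j ^ ((1 - α) / (2 * α)) : ℝ) : ℂ))) h₂ α) :=
  renyi_maximally_correlated_general ρ hρ q ρMC hMCdef hMC α hα0 h₁ h₂
end
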